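/- Let Π : V* → V be skew and W ⊆ V a subspace such that Π(W°) and W are complementary (Π(W°) ∩ W = {0} and Π(W°) + W = V). Let P : V → V be the linear projection onto W along Π(W°), and define Π_Dirac := P ∘ Π : V* → V. Then, with S := {0} ⊕ W° ⊆ V ⊕ V*, the graph of Π_Dirac equals the stretching of the graph of Π along S: graph(Π_Dirac) = ((graph Π) ∩ S^⊥) + S. Moreover Π_Dirac vanishes on W°. -/
import Mathlib


/-- The canonical symmetric pairing on `V ⊕ V*`:
`⟨(X,ξ),(Y,η)⟩ = ½ (ξ(Y) + η(X))`. -/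
noncomputable def pairVD (V : Type*) [AddCommGroup V] [Module ℝ V] :
    (V × Module.Dual ℝ V) →ₗ[ℝ] (V × Module.Dual ℝ V) →ₗ[ℝ] ℝ :=
  LinearMap.mk₂ ℝ (fun p q => (p.2 q.1 + q.2 p.1) / 2)
    (by intro m m' n; simp; ring)
    (by intro c m n; simp; ring)
    (by intro m n n'; simp; ring)
    (by intro c m n; simp; ring)

/-- The orthogonal of a subspace of `V ⊕ V*` with respect to the canonical pairing. -/
noncomputable def perpVD {V : Type*} [AddCommGroup V] [Module ℝ V]
    (A : Submodule ℝ (V × Module.Dual ℝ V)) : Submodule ℝ (V × Module.Dual ℝ V) where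
  carrier := {e | ∀ a ∈ A, pairVD V e a = 0}
  add_mem' := by
    intro x y hx hy a ha
    simp only [Set.mem_setOf_eq] at *
    rw [map_add, LinearMap.add_apply, hx a ha, hy a ha, add_zero]
  zero_mem' := by
    intro a ha
    simp
  smul_mem' := by
    intro c x hx a ha
    simp only [Set.mem_setOf_eq] at *
    rw [map_smul, LinearMap.smul_apply, hx a ha, smul_zero]

/-- Let `Pi : V* → V` be skew and `W ⊆ V` with `Pi(W°)` and `W`
complementary. Let `P : V → V` be the projection onto `W` along `Pi(W°)` and
`Pi_Dirac := P ∘ Pi`. Then, with `S := {0} ⊕ W°`, the graph of `Pi_Dirac` equals the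
stretching of the graph of `Pi` along `S`, and `Pi_Dirac` vanishes on `W°`. -/
theorem dirac_bivector_is_stretching
    {V : Type*} [AddCommGroup V] [Module ℝ V] [FiniteDimensional ℝ V]
    (Pi : Module.Dual ℝ V →ₗ[ℝ] V)
    (hskew : ∀ ξ η : Module.Dual ℝ V, ξ (Pi η) = - η (Pi ξ))
    (W : Submodule ℝ V)
    (h1 : W.dualAnnihilator.map Pi ⊓ W = ⊥)
    (h2 : W.dualAnnihilator.map Pi ⊔ W = ⊤)
    (P : V →ₗ[ℝ] V)
    (hPW : ∀ v : V, P v ∈ W)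
    (hPid : ∀ w ∈ W, P w = w)
    (hPker : ∀ v ∈ W.dualAnnihilator.map Pi, P v = 0) :
    LinearMap.range ((P ∘ₗ Pi).prod (LinearMap.id : Module.Dual ℝ V →ₗ[ℝ] Module.Dual ℝ V)) =
      (LinearMap.range (Pi.prod (LinearMap.id : Module.Dual ℝ V →ₗ[ℝ] Module.Dual ℝ V)) ⊓
          perpVD ((⊥ : Submodule ℝ V).prod W.dualAnnihilator)) ⊔
        (⊥ : Submodule ℝ V).prod W.dualAnnihilator ∧
    ∀ ξ ∈ W.dualAnnihilator, (P ∘ₗ Pi) ξ = 0 := by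
  have hzero : ∀ ξ ∈ W.dualAnnihilator, P (Pi ξ) = 0 := fun ξ hξ =>
    hPker _ ⟨ξ, hξ, rfl⟩
  constructor
  · apply le_antisymm
    · rintro x ⟨ξ, rfl⟩
      have h2' : Pi ξ ∈ (⊤ : Submodule ℝ V) := trivial
      rw [← h2] at h2'
      obtain ⟨u, hu, w, hw, huw⟩ := Submodule.mem_sup.mp h2'
      obtain ⟨η, hη, rfl⟩ := hu
      have hPval : P (Pi ξ) = w := by
        rw [← huw, map_add, hzero η hη, hPid w hw, zero_add]
      refine Submodule.mem_sup.mpr ⟨(w, ξ - η), ⟨⟨ξ - η, ?_⟩, ?_⟩, (0, η), ?_, ?_⟩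
      · have : Pi (ξ - η) = w := by rw [map_sub, ← huw]; abel
        simp [LinearMap.prod_apply, this]
      · rintro ⟨a1, a2⟩ ha
        simp only [Submodule.mem_prod, Submodule.mem_bot] at ha
        obtain ⟨rfl, ha2⟩ := ha
        have : a2 w = 0 := (Submodule.mem_dualAnnihilator a2).mp ha2 w hw
        simp [pairVD, this]
      · exact ⟨Submodule.mem_bot ℝ |>.mpr rfl, hη⟩
      · simp only [LinearMap.prod_apply, LinearMap.comp_apply, LinearMap.id_apply,
          Prod.mk_add_mk, hPval]
        ext <;> simp [hPval]
    · rintro x hx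
      obtain ⟨a, ⟨⟨ξ, rfl⟩, hperp⟩, b, hb, rfl⟩ := Submodule.mem_sup.mp hx
      obtain ⟨hb1, hb2⟩ := Submodule.mem_prod.mp hb
      rw [Submodule.mem_bot] at hb1
      have hmem : Pi ξ ∈ W := by
        rw [← Subspace.forall_mem_dualAnnihilator_apply_eq_zero_iff W (Pi ξ)]
        intro φ hφ
        have := hperp (0, φ) ⟨Submodule.mem_bot ℝ |>.mpr rfl, hφ⟩
        simp only [pairVD, LinearMap.mk₂_apply, LinearMap.prod_apply, LinearMap.id_apply] at this
        have h0 : (φ (Pi ξ) + 0) / 2 = 0 := by simpa using this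
        linarith
      refine ⟨ξ + b.2, ?_⟩
      ext
      · simp [hb1, map_add, hzero b.2 hb2, hPid _ hmem]
      · simp
  · intro ξ hξ
    exact hzero ξ hξ
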